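/- Fix a wavelength λ > 0 and an occlusion factor T ∈ ℝ with T > 0, and let s₁ and s₂ be two distinct points of EuclideanSpace ℝ (Fin 3). Define η_eff(s, r) = (λ/(4π‖s − r‖)) · exp(−i·(2π/λ)·‖s − r‖) · T for s ≠ r. Then the set {r : r ≠ s₁ ∧ r ≠ s₂ ∧ η_eff(s₁, r) = η_eff(s₂, r)} has Lebesgue measure zero. -/

import Mathlib

open Complex Real MeasureTheory

/-- The effective propagation factor `η_eff` as a function of the distance `d = ‖s - r‖`. -/
noncomputable def effPropagation (lam T d : ℝ) : ℂ :=
  ((lam / (4 * π * d) : ℝ) : ℂ) * exp (-I * ((2 * π / lam : ℝ) : ℂ) * (d : ℂ)) * (T : ℂ)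

theorem norm_effPropagation (lam T d : ℝ) :
    ‖effPropagation lam T d‖ = |lam| * |T| / (4 * π * |d|) := by
  have hphase : -I * ((2 * π / lam : ℝ) : ℂ) * (d : ℂ) = ((-(2 * π / lam * d) : ℝ) : ℂ) * I := by
    push_cast; ring
  rw [effPropagation, hphase, norm_mul, norm_mul, norm_exp_ofReal_mul_I, norm_real, norm_real,
    Real.norm_eq_abs, Real.norm_eq_abs, abs_div, abs_mul, abs_mul, abs_of_pos pi_pos]
  ring

/-- The phase has modulus one, so the amplitude `|lam| |T| / (4 π d)` alone recovers `d`. -/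
theorem effPropagation_injOn {lam T : ℝ} (hlam : lam ≠ 0) (hT : T ≠ 0) :
    Set.InjOn (effPropagation lam T) (Set.Ioi 0) := by
  intro d₁ hd₁ d₂ hd₂ heq
  have hnorm := congrArg norm heq
  rw [norm_effPropagation, norm_effPropagation, abs_of_pos (Set.mem_Ioi.1 hd₁),
    abs_of_pos (Set.mem_Ioi.1 hd₂)] at hnorm
  have hc : |lam| * |T| ≠ 0 := by positivity
  have h4π : (4 * π : ℝ) ≠ 0 := by positivity
  exact mul_left_cancel₀ h4π (inv_injective (mul_left_cancel₀ hc hnorm))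

theorem MeasureTheory.Measure.addHaar_perpBisector {E : Type*} [NormedAddCommGroup E]
    [InnerProductSpace ℝ E] [FiniteDimensional ℝ E] [MeasurableSpace E] [BorelSpace E]
    (μ : Measure E) [μ.IsAddHaarMeasure] {p₁ p₂ : E} (h : p₁ ≠ p₂) :
    μ (AffineSubspace.perpBisector p₁ p₂) = 0 :=
  Measure.addHaar_affineSubspace μ _ (AffineSubspace.perpBisector_eq_top.not.2 h)

/-- For two distinct scatterers, the set of receiver positions at which the effective
propagation factors coincide has Lebesgue measure zero. -/
theorem eta_eff_equal_set_measure_zero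
    (lam : ℝ) (hlam : 0 < lam) (T : ℝ) (hT : 0 < T)
    (s₁ s₂ : EuclideanSpace ℝ (Fin 3)) (hs : s₁ ≠ s₂)
    (ηeff : EuclideanSpace ℝ (Fin 3) → EuclideanSpace ℝ (Fin 3) → ℂ)
    (hη : ∀ s r : EuclideanSpace ℝ (Fin 3), s ≠ r →
      ηeff s r = ((lam / (4 * Real.pi * ‖s - r‖) : ℝ) : ℂ) *
        Complex.exp (-Complex.I * ((2 * Real.pi / lam : ℝ) : ℂ) * ((‖s - r‖ : ℝ) : ℂ)) *
        (T : ℂ)) :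
    volume {r : EuclideanSpace ℝ (Fin 3) |
      r ≠ s₁ ∧ r ≠ s₂ ∧ ηeff s₁ r = ηeff s₂ r} = 0 := by
  refine measure_mono_null ?_ (Measure.addHaar_perpBisector volume hs)
  rintro r ⟨hr₁, hr₂, heq⟩
  rw [hη s₁ r (Ne.symm hr₁), hη s₂ r (Ne.symm hr₂)] at heq
  rw [SetLike.mem_coe, AffineSubspace.mem_perpBisector_iff_dist_eq', dist_eq_norm, dist_eq_norm]
  exact effPropagation_injOn hlam.ne' hT.ne' (norm_sub_pos_iff.2 hr₁.symm)
    (norm_sub_pos_iff.2 hr₂.symm) heq
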